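/- arXiv:math/0508568 — 2 statements merged into one kernel-verified Lean document; each statement's English description precedes it below -/
import Mathlib

section
/- In particular, det(exp(z·J) ∓ I_{2N}) = 2^N (1 ∓ cos z)^N for every z ∈ ℂ (taking τ = ±1), where J is the 2N×2N block matrix (0, I_N; -I_N, 0). -/
open Matrix

section Aux

variable (N : ℕ)

private noncomputable def Bm (a b c d : ℂ) : Matrix (Fin N ⊕ Fin N) (Fin N ⊕ Fin N) ℂ :=
  Matrix.fromBlocks (a • 1) (b • 1) (c • 1) (d • 1)

private lemma Bm_mul (a b c d a' b' c' d' : ℂ) :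
    Bm N a b c d * Bm N a' b' c' d'
      = Bm N (a*a' + b*c') (a*b' + b*d') (c*a' + d*c') (c*b' + d*d') := by
  simp only [Bm, Matrix.fromBlocks_multiply, Matrix.smul_mul, Matrix.mul_smul, smul_smul,
    mul_one, ← add_smul]
  congr 1 <;> congr 1 <;> ring

private lemma Bm_one : Bm N 1 0 0 1 = 1 := by
  simp [Bm, ← Matrix.fromBlocks_one]

private noncomputable def Pm : Matrix (Fin N ⊕ Fin N) (Fin N ⊕ Fin N) ℂ :=
  Bm N 1 1 Complex.I (-Complex.I)

private noncomputable def Qm : Matrix (Fin N ⊕ Fin N) (Fin N ⊕ Fin N) ℂ :=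
  Bm N (1/2) (-Complex.I/2) (1/2) (Complex.I/2)

private lemma PQ : Pm N * Qm N = 1 := by
  rw [Pm, Qm, Bm_mul]
  have h1 : (1:ℂ) * (1/2) + 1 * (1/2) = 1 := by norm_num
  have h2 : (1:ℂ) * (-Complex.I/2) + 1 * (Complex.I/2) = 0 := by ring
  have h3 : Complex.I * (1/2) + (-Complex.I) * (1/2 : ℂ) = 0 := by ring
  have h4 : Complex.I * (-Complex.I/2) + (-Complex.I) * (Complex.I/2) = 1 := by
    linear_combination -Complex.I_mul_I
  rw [h1, h2, h3, h4, Bm_one]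

private lemma QP : Qm N * Pm N = 1 := by
  rw [Pm, Qm, Bm_mul]
  have h1 : (1/2 : ℂ) * 1 + (-Complex.I/2) * Complex.I = 1 := by
    linear_combination -(1/2 : ℂ) * Complex.I_mul_I
  have h2 : (1/2 : ℂ) * 1 + (-Complex.I/2) * (-Complex.I) = 0 := by
    linear_combination (1/2 : ℂ) * Complex.I_mul_I
  have h3 : (1/2 : ℂ) * 1 + (Complex.I/2) * Complex.I = 0 := by
    linear_combination (1/2 : ℂ) * Complex.I_mul_I
  have h4 : (1/2 : ℂ) * 1 + (Complex.I/2) * (-Complex.I) = 1 := by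
    linear_combination -(1/2 : ℂ) * Complex.I_mul_I
  rw [h1, h2, h3, h4, Bm_one]

end Aux

/-- For every `z ∈ ℂ`, `det (exp (z • J) ∓ I) = 2^N (1 ∓ cos z)^N`,
where `J = (0, I_N; -I_N, 0)`. -/
theorem det_exp_zJ_sub_one (N : ℕ) (hN : 0 < N) (z : ℂ)
    (J : Matrix (Fin N ⊕ Fin N) (Fin N ⊕ Fin N) ℂ)
    (hJ : J = Matrix.fromBlocks 0 1 (-1) 0) :
    (NormedSpace.exp (z • J) - 1).det = 2 ^ N * (1 - Complex.cos z) ^ N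
    ∧ (NormedSpace.exp (z • J) + 1).det = 2 ^ N * (1 + Complex.cos z) ^ N := by
  classical
  set w := z * Complex.I with hw
  set d : Fin N ⊕ Fin N → ℂ := Sum.elim (fun _ => w) (fun _ => -w) with hd
  -- z • J in Bm form
  have hzJ : z • J = Bm N 0 z (-z) 0 := by
    rw [hJ, Bm, Matrix.fromBlocks_smul]
    congr 1 <;> simp
  -- the diagonal matrix in Bm form
  have hD : Matrix.diagonal d = Bm N w 0 0 (-w) := by
    rw [Bm]
    ext (i | i) (j | j) <;>
      simp [hd, Matrix.diagonal_apply, Matrix.one_apply, mul_ite, Matrix.fromBlocks] <;>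
      split_ifs <;> simp
  -- the unit
  set U : (Matrix (Fin N ⊕ Fin N) (Fin N ⊕ Fin N) ℂ)ˣ := ⟨Pm N, Qm N, PQ N, QP N⟩ with hU
  have hUval : (U : Matrix (Fin N ⊕ Fin N) (Fin N ⊕ Fin N) ℂ) = Pm N := rfl
  have hUinv : ((U⁻¹ : (Matrix (Fin N ⊕ Fin N) (Fin N ⊕ Fin N) ℂ)ˣ) :
      Matrix (Fin N ⊕ Fin N) (Fin N ⊕ Fin N) ℂ) = Qm N := rfl
  -- conjugation identity: z • J = P * D * Q
  have hmul : (z • J) * Pm N = Pm N * Matrix.diagonal d := by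
    rw [hzJ, hD, Pm, Bm_mul, Bm_mul, hw]
    ring_nf
    rw [Complex.I_sq]
    ring_nf
  have hconj : z • J = (U : Matrix (Fin N ⊕ Fin N) (Fin N ⊕ Fin N) ℂ) * Matrix.diagonal d *
      ((U⁻¹ : (Matrix (Fin N ⊕ Fin N) (Fin N ⊕ Fin N) ℂ)ˣ) :
        Matrix (Fin N ⊕ Fin N) (Fin N ⊕ Fin N) ℂ) := by
    rw [hUval, hUinv, ← hmul, Matrix.mul_assoc, PQ, Matrix.mul_one]
  -- exponential of the diagonal matrix
  have hexpd : NormedSpace.exp (Matrix.diagonal d)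
      = Matrix.diagonal (Sum.elim (fun _ : Fin N => Complex.exp w)
          (fun _ : Fin N => Complex.exp (-w))) := by
    have hfun : (fun i => NormedSpace.exp (d i))
        = Sum.elim (fun _ : Fin N => Complex.exp w) (fun _ : Fin N => Complex.exp (-w)) := by
      funext i
      cases i <;> simp [hd, ← Complex.exp_eq_exp_ℂ]
    rw [Matrix.exp_diagonal, Pi.exp_def, hfun]
  have hexp : NormedSpace.exp (z • J)
      = Pm N * Matrix.diagonal (Sum.elim (fun _ : Fin N => Complex.exp w)
          (fun _ : Fin N => Complex.exp (-w))) * Qm N := by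
    rw [hconj, Matrix.exp_units_conj, hexpd, hUval, hUinv]
  have hdetPQ : (Pm N).det * (Qm N).det = 1 := by
    rw [← Matrix.det_mul, PQ, Matrix.det_one]
  set u := Complex.exp w with hu
  set v := Complex.exp (-w) with hv
  have huv : u * v = 1 := by rw [hu, hv, ← Complex.exp_add]; simp
  have hcos : u + v = 2 * Complex.cos z := by rw [Complex.cos, hu, hv, hw]; ring
  -- generic computation
  have key : ∀ c : ℂ, (NormedSpace.exp (z • J) + c • 1).det = ((u + c) * (v + c)) ^ N := by
    intro c
    have h1 : Pm N * (c • (1 : Matrix (Fin N ⊕ Fin N) (Fin N ⊕ Fin N) ℂ)) * Qm N = c • 1 := by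
      rw [Matrix.mul_smul, mul_one, Matrix.smul_mul, PQ]
    have h2 : NormedSpace.exp (z • J) + c • 1
        = Pm N * (Matrix.diagonal (Sum.elim (fun _ : Fin N => u)
            (fun _ : Fin N => v)) + c • 1) * Qm N := by
      rw [Matrix.mul_add, Matrix.add_mul, h1, hexp]
    have h3 : Matrix.diagonal (Sum.elim (fun _ : Fin N => u) (fun _ : Fin N => v)) + c • 1
        = Matrix.diagonal (Sum.elim (fun _ : Fin N => u + c) (fun _ : Fin N => v + c)) := by
      ext (i | i) (j | j) <;> by_cases h : i = j <;>
        simp [Matrix.diagonal_apply, Matrix.one_apply, Matrix.add_apply, Matrix.smul_apply, h]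
    rw [h2, h3, Matrix.det_mul, Matrix.det_mul]
    rw [show (Pm N).det * (Matrix.diagonal (Sum.elim (fun _ : Fin N => u + c)
        (fun _ : Fin N => v + c))).det * (Qm N).det
      = (Matrix.diagonal (Sum.elim (fun _ : Fin N => u + c)
        (fun _ : Fin N => v + c))).det * ((Pm N).det * (Qm N).det) by ring, hdetPQ, mul_one]
    rw [Matrix.det_diagonal, Fintype.prod_sum_type]
    simp [mul_pow]
  constructor
  · have := key (-1)
    rw [show ((-1 : ℂ) • (1 : Matrix (Fin N ⊕ Fin N) (Fin N ⊕ Fin N) ℂ)) = -1 by simp] at this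
    rw [sub_eq_add_neg, this, ← mul_pow]
    congr 1
    linear_combination huv - hcos
  · have := key 1
    rw [one_smul] at this
    rw [this, ← mul_pow]
    congr 1
    linear_combination huv + hcos
end

section
/- Let μ be a Borel measure on ℝ with ∫(1+x^{2p}) dμ(x) < ∞ for some integer p ≥ 0, and set Q_n = ∫ x^n dμ(x) for 0 ≤ n ≤ 2p. Then for each r > 0, ∫ dμ(t)/(t-z) = -∑_{k=0}^{2p} Q_k / z^{k+1} + o(1)/z^{2p+1} as |z| → ∞ within the sector {z = x+iy : y > r|x|}. -/
open MeasureTheory Finset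

lemma geom_aux (n : ℕ) (t z : ℂ) (hz : z ≠ 0) (htz : t - z ≠ 0) :
    (t - z)⁻¹ + ∑ k ∈ Finset.range n, t ^ k / z ^ (k + 1)
      = (z ^ n)⁻¹ * (t ^ n / (t - z)) := by
  induction n with
  | zero => simp
  | succ n ih =>
    rw [Finset.sum_range_succ, ← add_assoc, ih]
    field_simp
    ring

lemma sector_aux (r : ℝ) (hr : 0 < r) (z : ℂ) (hz : r * |z.re| < z.im) (t : ℝ) :
    |t| ≤ (1 + 1 / r) * ‖(t:ℂ) - z‖ := by
  set d := ‖(t:ℂ) - z‖ with hd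
  have him : z.im ≤ d := by
    have h := Complex.abs_im_le_norm ((t:ℂ) - z)
    simp only [Complex.sub_im, Complex.ofReal_im, zero_sub, abs_neg] at h
    exact (le_abs_self _).trans h
  have hre : |t - z.re| ≤ d := by
    have h := Complex.abs_re_le_norm ((t:ℂ) - z)
    simpa using h
  have h1 : r * |z.re| ≤ d := hz.le.trans him
  have h2 : |z.re| ≤ d / r := by rw [le_div_iff₀ hr]; linarith [mul_comm r |z.re|]
  have h3 : |t| ≤ |t - z.re| + |z.re| := by
    have := abs_add_le (t - z.re) z.re; simpa using this
  have hd0 : 0 ≤ d := norm_nonneg _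
  have : (1 + 1/r) * d = d + d / r := by field_simp
  rw [this]
  linarith


/-- (Nevanlinna) If `μ` is a Borel measure on `ℝ` with `∫ (1 + x^{2p}) dμ < ∞` and
`Qₙ = ∫ xⁿ dμ` for `0 ≤ n ≤ 2p`, then for each `r > 0`,
`∫ dμ(t)/(t-z) = -∑_{k=0}^{2p} Q_k / z^{k+1} + o(1)/z^{2p+1}`
as `|z| → ∞` within the sector `{z = x + iy : y > r |x|}`. -/
theorem nevanlinna_asymptotics (μ : Measure ℝ) (p : ℕ)
    (hμ : Integrable (fun x : ℝ => 1 + x ^ (2 * p)) μ)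
    (Q : ℕ → ℝ) (hQ : ∀ n ≤ 2 * p, Q n = ∫ x, x ^ n ∂μ) :
    ∀ r > (0:ℝ), ∀ ε > (0:ℝ), ∃ R : ℝ, ∀ z : ℂ,
      R ≤ ‖z‖ → r * |z.re| < z.im →
      ‖(∫ t : ℝ, ((t : ℂ) - z)⁻¹ ∂μ)
          + ∑ k ∈ Finset.range (2 * p + 1), (Q k : ℂ) / z ^ (k + 1)‖
        ≤ ε / ‖z‖ ^ (2 * p + 1) := by
  intro r hr ε hε
  -- integrability of powers
  have hpow : ∀ n ≤ 2 * p, Integrable (fun x : ℝ => x ^ n) μ := by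
    intro n hn
    refine hμ.mono' (continuous_pow n).aestronglyMeasurable (ae_of_all _ fun x => ?_)
    rw [Real.norm_eq_abs, abs_pow]
    rcases le_or_gt |x| 1 with h | h
    · have h1 : |x| ^ n ≤ 1 := pow_le_one₀ (abs_nonneg x) h
      have h2 : 0 ≤ x ^ (2*p) := (even_two_mul p).pow_nonneg x
      nlinarith
    · have h1 : |x| ^ n ≤ |x| ^ (2*p) := pow_le_pow_right₀ h.le hn
      have h2 : |x| ^ (2*p) = x ^ (2*p) := by
        rw [← abs_pow, abs_of_nonneg ((even_two_mul p).pow_nonneg x)]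
      nlinarith
  have hone : Integrable (fun _ : ℝ => (1:ℝ)) μ := by
    simpa using hpow 0 (Nat.zero_le _)
  haveI hfin : IsFiniteMeasure μ := by
    constructor
    rcases (integrable_const_iff).mp hone with h | h
    · norm_num at h
    · exact h.measure_univ_lt_top
  have hh : Integrable (fun x : ℝ => x ^ (2*p)) μ := hpow _ le_rfl
  set M : ℝ := (μ Set.univ).toReal with hM
  set K : ℝ := 1 + 1 / r with hK
  have hK0 : 0 < K := by positivity
  -- tail integrals
  set s : ℕ → Set ℝ := fun n => Metric.closedBall (0:ℝ) n with hs
  have hsm : ∀ n, MeasurableSet (s n) := fun n => measurableSet_closedBall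
  have hmono : Monotone s := fun n m h =>
    Metric.closedBall_subset_closedBall (by exact_mod_cast h)
  have hunion : (⋃ n, s n) = Set.univ := by
    rw [Set.iUnion_eq_univ_iff]
    intro x
    obtain ⟨n, hn⟩ := exists_nat_ge |x|
    exact ⟨n, by simpa [hs, Real.dist_eq] using hn⟩
  have htend : Filter.Tendsto (fun n => ∫ t in s n, t ^ (2*p) ∂μ) Filter.atTop
      (nhds (∫ t, t ^ (2*p) ∂μ)) := by
    have := MeasureTheory.tendsto_setIntegral_of_monotone hsm hmono
      (by rw [hunion] at *; exact hh.integrableOn)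
    rwa [hunion, setIntegral_univ] at this
  have htail : Filter.Tendsto (fun n => ∫ t in (s n)ᶜ, t ^ (2*p) ∂μ) Filter.atTop
      (nhds 0) := by
    have heq : ∀ n, ∫ t in (s n)ᶜ, t ^ (2*p) ∂μ
        = (∫ t, t ^ (2*p) ∂μ) - ∫ t in s n, t ^ (2*p) ∂μ := by
      intro n
      rw [← integral_add_compl (hsm n) hh]; ring
    simp_rw [heq]
    simpa using htend.const_sub (∫ t, t ^ (2*p) ∂μ)
  obtain ⟨N, hN⟩ := (htail.eventually_lt_const (show (0:ℝ) < ε / (2*K) by positivity)).exists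
  set C : ℝ := (N:ℝ) ^ (2*p+1) * M with hC
  have hC0 : 0 ≤ C := by positivity
  refine ⟨(N:ℝ) + 1 + 2*C/ε, ?_⟩
  intro z hR hsec
  have him0 : 0 < z.im := lt_of_le_of_lt (by positivity) hsec
  have hz0 : z ≠ 0 := fun h => by simp [h] at him0
  have habs0 : 0 < ‖z‖ := norm_pos_iff.mpr hz0
  have htz : ∀ t : ℝ, (t:ℂ) - z ≠ 0 := by
    intro t h
    have h2 := congrArg Complex.im h
    simp at h2
    linarith
  set g : ℝ → ℂ := fun t => (t:ℂ) ^ (2*p+1) / ((t:ℂ) - z) with hg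
  have hg_cont : Continuous g := by
    exact (Complex.continuous_ofReal.pow _).div
      (Complex.continuous_ofReal.sub continuous_const) htz
  have hg_norm : ∀ t : ℝ, ‖g t‖ = |t| ^ (2*p+1) / ‖(t:ℂ) - z‖ := by
    intro t
    simp [hg, map_div₀, map_pow]
  have hd_pos : ∀ t : ℝ, 0 < ‖(t:ℂ) - z‖ :=
    fun t => norm_pos_iff.mpr (htz t)
  have hg_bound : ∀ t : ℝ, ‖g t‖ ≤ K * t ^ (2*p) := by
    intro t
    have h1 : |t| ≤ K * ‖(t:ℂ) - z‖ := sector_aux r hr z hsec t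
    have h2 : |t| ^ (2*p) = t ^ (2*p) := by
      rw [← abs_pow, abs_of_nonneg ((even_two_mul p).pow_nonneg t)]
    rw [hg_norm t, div_le_iff₀ (hd_pos t), pow_succ]
    calc |t| ^ (2*p) * |t| ≤ |t| ^ (2*p) * (K * ‖(t:ℂ) - z‖) := by
          exact mul_le_mul_of_nonneg_left h1 (by positivity)
      _ = K * t ^ (2*p) * ‖(t:ℂ) - z‖ := by rw [h2]; ring
  have hg_int : Integrable g μ :=
    (hh.const_mul K).mono' hg_cont.aestronglyMeasurable (ae_of_all _ hg_bound)
  -- integral identity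
  have hint1 : Integrable (fun t : ℝ => ((t:ℂ) - z)⁻¹) μ := by
    refine (integrable_const (z.im)⁻¹).mono'
      ((Complex.continuous_ofReal.sub continuous_const).inv₀ htz).aestronglyMeasurable
      (ae_of_all _ fun t => ?_)
    show ‖((t:ℂ) - z)⁻¹‖ ≤ (z.im)⁻¹
    rw [norm_inv]
    apply inv_anti₀ him0
    have h := Complex.abs_im_le_norm ((t:ℂ) - z)
    simp only [Complex.sub_im, Complex.ofReal_im, zero_sub, abs_neg] at h
    exact (le_abs_self _).trans h
  have hint2 : ∀ k ∈ Finset.range (2*p+1), Integrable (fun t : ℝ => (t:ℂ) ^ k / z ^ (k+1)) μ := by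
    intro k hk
    have hk' : k ≤ 2*p := Nat.lt_succ_iff.mp (Finset.mem_range.mp hk)
    have : Integrable (fun t : ℝ => ((t ^ k : ℝ) : ℂ)) μ := (hpow k hk').ofReal
    simpa [Complex.ofReal_pow] using this.div_const (z ^ (k+1))
  have hsum : ∀ k ∈ Finset.range (2*p+1),
      (Q k : ℂ) / z ^ (k+1) = ∫ t : ℝ, (t:ℂ) ^ k / z ^ (k+1) ∂μ := by
    intro k hk
    have hk' : k ≤ 2*p := Nat.lt_succ_iff.mp (Finset.mem_range.mp hk)
    rw [hQ k hk', integral_div]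
    congr 1
    have h := integral_ofReal (𝕜 := ℂ) (f := fun t : ℝ => t ^ k) (μ := μ)
    push_cast at h
    exact h.symm
  have key : (∫ t : ℝ, ((t : ℂ) - z)⁻¹ ∂μ)
        + ∑ k ∈ Finset.range (2 * p + 1), (Q k : ℂ) / z ^ (k + 1)
      = (z ^ (2*p+1))⁻¹ * ∫ t, g t ∂μ := by
    rw [Finset.sum_congr rfl hsum, ← integral_finset_sum _ hint2,
      ← integral_add hint1 (integrable_finset_sum _ hint2), ← integral_const_mul]
    refine integral_congr_ae (ae_of_all _ fun t => ?_)
    exact geom_aux (2*p+1) t z hz0 (htz t)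
  -- bound the remainder integral
  have hq : 0 ≤ 2*C/ε := by positivity
  have hden : 0 < ‖z‖ - N := by linarith
  have hb1 : ∀ t ∈ s N, ‖g t‖ ≤ (N:ℝ)^(2*p+1) / (‖z‖ - N) := by
    intro t ht
    have ht' : |t| ≤ (N:ℝ) := by simpa [hs, Real.dist_eq] using ht
    have hlow : ‖z‖ - |t| ≤ ‖(t:ℂ) - z‖ := by
      have h1 := norm_sub_norm_le z ((t:ℂ))
      rw [norm_sub_rev] at h1
      simpa [Complex.norm_real, abs_of_nonneg (abs_nonneg t)] using h1
    rw [hg_norm t]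
    apply div_le_div₀ (by positivity) (pow_le_pow_left₀ (abs_nonneg t) ht' _) hden
    linarith
  have hs1 : ∫ t in s N, ‖g t‖ ∂μ ≤ ε / 2 := by
    have step1 : ∫ t in s N, ‖g t‖ ∂μ
        ≤ ((N:ℝ)^(2*p+1) / (‖z‖ - N)) * M := by
      calc ∫ t in s N, ‖g t‖ ∂μ
          ≤ ∫ _ in s N, ((N:ℝ)^(2*p+1) / (‖z‖ - N)) ∂μ :=
            setIntegral_mono_on hg_int.norm.integrableOn
              (integrable_const _).integrableOn (hsm N) hb1
        _ = ((N:ℝ)^(2*p+1) / (‖z‖ - N)) * (μ (s N)).toReal := by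
            rw [setIntegral_const]; exact mul_comm _ _
        _ ≤ ((N:ℝ)^(2*p+1) / (‖z‖ - N)) * M := by
            apply mul_le_mul_of_nonneg_left _ (by positivity)
            exact ENNReal.toReal_mono (measure_ne_top μ _)
              (measure_mono (Set.subset_univ _))
    have hMnn : 0 ≤ M := ENNReal.toReal_nonneg
    have heq : ((N:ℝ)^(2*p+1) / (‖z‖ - N)) * M = C / (‖z‖ - N) := by
      rw [hC]; ring
    have hfin2 : C / (‖z‖ - N) ≤ ε / 2 := by
      rw [div_le_iff₀ hden]
      have h2 : ε * (2*C/ε) = 2*C := by field_simp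
      nlinarith
    rw [heq] at step1
    linarith
  have hs2 : ∫ t in (s N)ᶜ, ‖g t‖ ∂μ ≤ ε / 2 := by
    calc ∫ t in (s N)ᶜ, ‖g t‖ ∂μ
        ≤ ∫ t in (s N)ᶜ, K * t^(2*p) ∂μ :=
          setIntegral_mono_on hg_int.norm.integrableOn
            ((hh.const_mul K).integrableOn) (hsm N).compl (fun t _ => hg_bound t)
      _ = K * ∫ t in (s N)ᶜ, t^(2*p) ∂μ := integral_const_mul K _
      _ ≤ K * (ε/(2*K)) := mul_le_mul_of_nonneg_left hN.le hK0.le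
      _ = ε/2 := by field_simp
  have htot : ∫ t, ‖g t‖ ∂μ ≤ ε := by
    rw [← integral_add_compl (hsm N) hg_int.norm]
    linarith
  have habsint : ‖∫ t, g t ∂μ‖ ≤ ε := by
    refine le_trans ?_ htot
    exact norm_integral_le_integral_norm _
  rw [key, norm_mul, norm_inv, norm_pow, inv_mul_eq_div]
  gcongr
end
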